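/- arXiv:2309.10521 — 2 statements merged into one kernel-verified Lean document; each statement's English description precedes it below -/
import Mathlib

section
/- Let h : ℤ → ℤ≥0 be nonzero with h(j) = 0 for j ≪ 0. Let k₀ = min{j : h(j) > 0}, k_f = min{j > k₀ : h(j) = 0} − 1 (possibly +∞), h₀ = h(k₀), h₁ = h(k₀+1), and c(h) = ⌊h₁/h₀⌋. Then k₀ ≤ qdepth(h) ≤ min{k_f, k₀ + c(h)}. -/
/-- `β_k^d(h) = Σ_{j ≤ k} (-1)^{k-j} C(d-j, k-j) h(j)` (a finite sum when `h`
vanishes for `j ≪ 0`). -/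
noncomputable def beta (h : ℤ → ℤ) (d k : ℤ) : ℤ :=
  ∑ᶠ j ∈ Set.Iic k, (-1 : ℤ) ^ (k - j).toNat * ((d - j).toNat.choose (k - j).toNat : ℤ) * h j

/-- The set of `d` such that `β_k^d(h) ≥ 0` for all `k ≤ d`; its maximum is `qdepth h`. -/
def qdepthSet (h : ℤ → ℤ) : Set ℤ := {d : ℤ | ∀ k ≤ d, 0 ≤ beta h d k}

lemma beta_eq_sum (h : ℤ → ℤ) (k₀ : ℤ) (h0 : ∀ j < k₀, h j = 0) (d k : ℤ) :
    beta h d k = ∑ j ∈ Finset.Icc k₀ k,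
      (-1 : ℤ) ^ (k - j).toNat * ((d - j).toNat.choose (k - j).toNat : ℤ) * h j := by
  apply finsum_mem_eq_sum_of_subset
  · rintro j ⟨hj1, hj2⟩
    simp only [Set.mem_Iic] at hj1
    simp only [Finset.coe_Icc, Set.mem_Icc]
    refine ⟨?_, hj1⟩
    by_contra hlt
    push_neg at hlt
    exact hj2 (by simp [h0 j hlt])
  · intro j hj
    simp only [Finset.coe_Icc, Set.mem_Icc] at hj
    exact Set.mem_Iic.mpr hj.2

lemma alt_choose_sum (n K : ℕ) (hK : K ≤ n) :
    ∑ t ∈ Finset.range (K + 1),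
      (-1 : ℤ) ^ t * ((n - t).choose (K - t) : ℤ) * (n.choose t : ℤ) =
      if K = 0 then (1 : ℤ) else 0 := by
  have key : ∀ t ∈ Finset.range (K + 1),
      (-1 : ℤ) ^ t * ((n - t).choose (K - t) : ℤ) * (n.choose t : ℤ)
        = (n.choose K : ℤ) * ((-1 : ℤ) ^ t * (K.choose t : ℤ)) := by
    intro t ht
    have ht' : t ≤ K := by
      simp only [Finset.mem_range] at ht; omega
    have hc := Nat.choose_mul (n := n) ht'
    have hc' : ((n.choose t : ℤ) * ((n - t).choose (K - t) : ℤ))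
        = (n.choose K : ℤ) * (K.choose t : ℤ) := by
      exact_mod_cast congrArg (Nat.cast : ℕ → ℤ) hc.symm
    calc (-1 : ℤ) ^ t * ((n - t).choose (K - t) : ℤ) * (n.choose t : ℤ)
        = (-1 : ℤ) ^ t * ((n.choose t : ℤ) * ((n - t).choose (K - t) : ℤ)) := by ring
      _ = (-1 : ℤ) ^ t * ((n.choose K : ℤ) * (K.choose t : ℤ)) := by rw [hc']
      _ = (n.choose K : ℤ) * ((-1 : ℤ) ^ t * (K.choose t : ℤ)) := by ring
  rw [Finset.sum_congr rfl key, ← Finset.mul_sum, Int.alternating_sum_range_choose]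
  split_ifs with hK0
  · subst hK0; simp
  · simp

lemma inv_sum (h : ℤ → ℤ) (k₀ : ℤ) (h0 : ∀ j < k₀, h j = 0) (d j : ℤ)
    (hkj : k₀ ≤ j) (hjd : j ≤ d) :
    ∑ i ∈ Finset.Icc k₀ j, ((d - i).toNat.choose (j - i).toNat : ℤ) * beta h d i = h j := by
  have expand : ∀ i ∈ Finset.Icc k₀ j,
      ((d - i).toNat.choose (j - i).toNat : ℤ) * beta h d i
        = ∑ m ∈ Finset.Icc k₀ i, ((d - i).toNat.choose (j - i).toNat : ℤ) *
            ((-1 : ℤ) ^ (i - m).toNat * ((d - m).toNat.choose (i - m).toNat : ℤ) * h m) := by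
    intro i _
    rw [beta_eq_sum h k₀ h0, Finset.mul_sum]
  rw [Finset.sum_congr rfl expand]
  rw [Finset.sum_comm' (t' := Finset.Icc k₀ j) (s' := fun m => Finset.Icc m j)
    (by intro i m; simp only [Finset.mem_Icc]; omega)]
  have inner : ∀ m ∈ Finset.Icc k₀ j,
      (∑ i ∈ Finset.Icc m j, ((d - i).toNat.choose (j - i).toNat : ℤ) *
        ((-1 : ℤ) ^ (i - m).toNat * ((d - m).toNat.choose (i - m).toNat : ℤ) * h m))
      = (if m = j then (1 : ℤ) else 0) * h m := by
    intro m hm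
    simp only [Finset.mem_Icc] at hm
    set n : ℕ := (d - m).toNat with hn
    set K : ℕ := (j - m).toNat with hKdef
    have hK : K ≤ n := by simp only [hn, hKdef]; omega
    have reindex : (∑ i ∈ Finset.Icc m j, ((d - i).toNat.choose (j - i).toNat : ℤ) *
        ((-1 : ℤ) ^ (i - m).toNat * ((d - m).toNat.choose (i - m).toNat : ℤ) * h m))
        = ∑ t ∈ Finset.range (K + 1),
            (-1 : ℤ) ^ t * ((n - t).choose (K - t) : ℤ) * (n.choose t : ℤ) * h m := by
      apply Finset.sum_nbij' (i := fun i => (i - m).toNat) (j := fun t => m + t)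
      · intro i hi
        simp only [Finset.mem_Icc] at hi
        simp only [Finset.mem_range, hKdef]; omega
      · intro t ht
        simp only [Finset.mem_range, hKdef] at ht
        simp only [Finset.mem_Icc]; omega
      · intro i hi
        simp only [Finset.mem_Icc] at hi
        omega
      · intro t ht
        simp only [Finset.mem_range, hKdef] at ht
        omega
      · intro i hi
        simp only [Finset.mem_Icc] at hi
        have e1 : (d - i).toNat = n - (i - m).toNat := by simp only [hn]; omega
        have e2 : (j - i).toNat = K - (i - m).toNat := by simp only [hKdef]; omega
        rw [e1, e2]; ring
    rw [reindex, ← Finset.sum_mul, alt_choose_sum n K hK]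
    congr 1
    simp only [hKdef]
    by_cases hmj : m = j
    · simp [hmj]
    · have hKne : K ≠ 0 := by simp only [hKdef]; omega
      rw [if_neg hKne, if_neg hmj]
  rw [Finset.sum_congr rfl inner]
  have step : ∀ x ∈ Finset.Icc k₀ j, (if x = j then (1 : ℤ) else 0) * h x
      = if x = j then h x else 0 := by
    intro x _; split_ifs <;> ring
  rw [Finset.sum_congr rfl step, Finset.sum_ite_eq' (Finset.Icc k₀ j) j h]
  rw [if_pos (by simp only [Finset.mem_Icc]; omega)]

theorem qdepth_bounds (h : ℤ → ℤ) (hne : h ≠ 0) (hnn : ∀ j, 0 ≤ h j)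
    (hvan : ∃ N : ℤ, ∀ j < N, h j = 0)
    (k₀ : ℤ) (hk0 : IsLeast {j : ℤ | 0 < h j} k₀)
    (d : ℤ) (hd : IsGreatest (qdepthSet h) d) :
    k₀ ≤ d ∧ d ≤ k₀ + h (k₀ + 1) / h k₀ ∧ ∀ j : ℤ, k₀ < j → h j = 0 → d ≤ j - 1 := by
  obtain ⟨hk0mem, hk0lb⟩ := hk0
  have hpos : 0 < h k₀ := hk0mem
  have h0 : ∀ j < k₀, h j = 0 := by
    intro j hj
    by_contra hne'
    have : 0 < h j := lt_of_le_of_ne (hnn j) (Ne.symm hne')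
    exact absurd (hk0lb this) (by omega)
  -- k₀ ∈ qdepthSet
  have hmem : k₀ ∈ qdepthSet h := by
    intro k hk
    rw [beta_eq_sum h k₀ h0]
    rcases lt_or_eq_of_le hk with hlt | heq
    · rw [Finset.Icc_eq_empty (by omega), Finset.sum_empty]
    · subst heq
      rw [Finset.Icc_self, Finset.sum_singleton]
      simpa using hnn k
  have hk0d : k₀ ≤ d := hd.2 hmem
  refine ⟨hk0d, ?_, ?_⟩
  · -- d ≤ k₀ + h(k₀+1)/h(k₀)
    rcases eq_or_lt_of_le hk0d with heq | hlt
    · have : 0 ≤ h (k₀ + 1) / h k₀ := Int.ediv_nonneg (hnn _) (le_of_lt hpos)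
      omega
    have hb := hd.1 (k₀ + 1) (by omega)
    rw [beta_eq_sum h k₀ h0] at hb
    have hIcc : Finset.Icc k₀ (k₀ + 1) = {k₀, k₀ + 1} := by
      ext x; simp only [Finset.mem_Icc, Finset.mem_insert, Finset.mem_singleton]; omega
    rw [hIcc, Finset.sum_insert (by simp), Finset.sum_singleton] at hb
    have e1 : (k₀ + 1 - k₀).toNat = 1 := by omega
    have e2 : (k₀ + 1 - (k₀ + 1)).toNat = 0 := by omega
    rw [e1, e2] at hb
    simp only [pow_one, pow_zero, Nat.choose_one_right, Nat.choose_zero_right, Nat.cast_one,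
      one_mul, neg_one_mul] at hb
    have e3 : ((d - k₀).toNat : ℤ) = d - k₀ := Int.toNat_of_nonneg (by omega)
    rw [e3] at hb
    have hmul : (d - k₀) * h k₀ ≤ h (k₀ + 1) := by linarith
    have := (Int.le_ediv_iff_mul_le hpos).mpr hmul
    linarith
  · -- qdepth ≤ first gap
    intro j hj hjz
    by_contra hcon
    push_neg at hcon
    have hjd : j ≤ d := by omega
    have hinv := inv_sum h k₀ h0 d j (le_of_lt hj) hjd
    have hbpos : beta h d k₀ = h k₀ := by
      rw [beta_eq_sum h k₀ h0, Finset.Icc_self, Finset.sum_singleton]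
      simp
    have hterm : (0 : ℤ) < ((d - k₀).toNat.choose (j - k₀).toNat : ℤ) * beta h d k₀ := by
      rw [hbpos]
      apply mul_pos _ hpos
      exact_mod_cast Nat.choose_pos (by omega)
    have hnonneg : ∀ i ∈ Finset.Icc k₀ j,
        (0 : ℤ) ≤ ((d - i).toNat.choose (j - i).toNat : ℤ) * beta h d i := by
      intro i hi
      simp only [Finset.mem_Icc] at hi
      exact mul_nonneg (by positivity) (hd.1 i (by omega))
    have hle : ((d - k₀).toNat.choose (j - k₀).toNat : ℤ) * beta h d k₀
        ≤ ∑ i ∈ Finset.Icc k₀ j, ((d - i).toNat.choose (j - i).toNat : ℤ) * beta h d i :=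
      Finset.single_le_sum hnonneg (by simp only [Finset.mem_Icc]; omega)
    rw [hinv, hjz] at hle
    linarith
end

section
/- Let n ≥ 1 and let P ∈ ℤ[X] be a polynomial of degree n with non-negative integer coefficients and P(0) > 0. Define h(j) = P(j) for j ≥ 0 and h(j) = 0 for j < 0. Then qdepth(h) ≤ 2^{n+1}. -/
/-!
Only `β₁` and `β₂` are needed. For `h` vanishing on the negatives, `β₁^d = h 1 - d h 0` and
`2 β₂^d = 2 h 2 - 2 (d - 1) h 1 + d (d - 1) h 0`. Non-negative coefficients and `deg P ≤ n` give
`P(2) ≤ 2ⁿ P(1) - (2ⁿ - 1) P(0)`, since `2ⁿ - 2ⁱ ≥ 0`. Substituting this and `h 1 ≥ d h 0` into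
`β₂^d ≥ 0` yields `((d - 1)(d - 2ⁿ⁺¹) - 2) h 0 ≤ 0`, impossible for `d > 2ⁿ⁺¹ ≥ 4` and `h 0 > 0`.
-/

open Polynomial

section Beta

variable {h : ℤ → ℤ}

lemma beta_eq_sum_Icc (h0 : ∀ j < 0, h j = 0) (d k : ℤ) :
    beta h d k = ∑ j ∈ Finset.Icc 0 k,
      (-1 : ℤ) ^ (k - j).toNat * ((d - j).toNat.choose (k - j).toNat : ℤ) * h j := by
  refine finsum_mem_eq_sum_of_inter_support_eq _ (Set.ext fun j => ?_)
  simp only [Set.mem_inter_iff, Function.mem_support, Finset.coe_Icc, Set.mem_Iic, Set.mem_Icc]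
  refine ⟨fun ⟨hjk, hne⟩ => ⟨⟨?_, hjk⟩, hne⟩, fun ⟨⟨_, hjk⟩, hne⟩ => ⟨hjk, hne⟩⟩
  by_contra! hj
  exact hne (by rw [h0 j hj, mul_zero])

lemma beta_one (h0 : ∀ j < 0, h j = 0) {d : ℤ} (hd : 0 ≤ d) :
    beta h d 1 = h 1 - d * h 0 := by
  rw [beta_eq_sum_Icc h0, show Finset.Icc (0 : ℤ) 1 = {0, 1} by rfl, Finset.sum_pair zero_ne_one]
  simp [Int.toNat_of_nonneg hd, neg_add_eq_sub]

lemma two_mul_beta_two (h0 : ∀ j < 0, h j = 0) {d : ℤ} (hd : 1 ≤ d) :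
    2 * beta h d 2 = 2 * h 2 - 2 * (d - 1) * h 1 + d * (d - 1) * h 0 := by
  lift d to ℕ using (by omega)
  have hchoose : 2 * (d.choose 2 : ℤ) = d * (d - 1) := by
    qify
    rw [Nat.cast_choose_two]
    ring
  rw [beta_eq_sum_Icc h0, show Finset.Icc (0 : ℤ) 2 = {0, 1, 2} by rfl,
    Finset.sum_insert (by decide), Finset.sum_pair (by decide)]
  simp only [Int.reduceNeg, sub_zero, Int.reduceToNat, even_two, Even.neg_pow, one_pow,
    Int.toNat_natCast, one_mul, Int.reduceSub, Int.toNat_one, pow_one, Int.pred_toNat,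
    Nat.choose_one_right, neg_mul, sub_self, Int.toNat_zero, pow_zero, Nat.choose_zero_right,
    Nat.cast_one, mul_one, Nat.cast_sub (by omega : 1 ≤ d)]
  linear_combination h 0 * hchoose

lemma le_two_mul_of_mem_qdepthSet (h0 : ∀ j < 0, h j = 0) (hpos : 0 < h 0) {E : ℤ}
    (hE : 2 ≤ E) (h2 : h 2 + (E - 1) * h 0 ≤ E * h 1) {d : ℤ} (hd : d ∈ qdepthSet h) :
    d ≤ 2 * E := by
  by_contra! hlt
  have hβ1 := hd 1 (by omega)
  have hβ2 := hd 2 (by omega)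
  rw [beta_one h0 (by omega)] at hβ1
  have hβ2' := mul_nonneg zero_le_two hβ2
  rw [two_mul_beta_two h0 (by omega)] at hβ2'
  have hβ12 : ((d - 1) * (d - 2 * E) - 2) * h 0 ≤ 0 := by
    linarith [mul_nonneg (by omega : (0 : ℤ) ≤ d - 1 - E) hβ1]
  have hfactor : 2 < (d - 1) * (d - 2 * E) := by nlinarith
  exact (mul_pos (by omega) hpos).not_ge hβ12

end Beta

lemma eval_two_add_le_two_pow_mul_eval_one {R : Type*} [CommRing R] [PartialOrder R]
    [IsOrderedRing R] {P : R[X]} {n : ℕ} (hdeg : P.natDegree ≤ n) (hcoeff : ∀ i, 0 ≤ P.coeff i) :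
    P.eval 2 + (2 ^ n - 1) * P.eval 0 ≤ 2 ^ n * P.eval 1 := by
  have hsum : 2 ^ n * P.eval 1 - P.eval 2
      = ∑ i ∈ Finset.range (n + 1), P.coeff i * (2 ^ n - 2 ^ i) := by
    rw [eval_eq_sum_range' (Nat.lt_succ_of_le hdeg), eval_eq_sum_range' (Nat.lt_succ_of_le hdeg),
      Finset.mul_sum, ← Finset.sum_sub_distrib]
    exact Finset.sum_congr rfl fun i _ => by ring
  have hterm : ∀ i ∈ Finset.range (n + 1), 0 ≤ P.coeff i * (2 ^ n - 2 ^ i) := fun i hi =>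
    mul_nonneg (hcoeff i)
      (sub_nonneg.2 (pow_le_pow_right₀ one_le_two (Finset.mem_range_succ_iff.1 hi)))
  have hterm0 := Finset.single_le_sum hterm (Finset.mem_range.2 n.succ_pos)
  rw [← hsum] at hterm0
  rw [← coeff_zero_eq_eval_zero]
  linear_combination hterm0

theorem qdepth_polynomial (n : ℕ) (hn : 1 ≤ n) (P : Polynomial ℤ)
    (hdeg : P.natDegree = n) (hcoeff : ∀ i, 0 ≤ P.coeff i) (hP0 : 0 < P.eval 0)
    (h : ℤ → ℤ) (hh : ∀ j : ℤ, h j = if 0 ≤ j then P.eval j else 0)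
    (d : ℤ) (hd : IsGreatest (qdepthSet h) d) :
    d ≤ 2 ^ (n + 1) := by
  have h0 : ∀ j < 0, h j = 0 := fun j hj => by simp [hh, not_le.2 hj]
  have hE : (2 : ℤ) ≤ 2 ^ n := le_self_pow₀ one_le_two (by omega)
  have h2 : h 2 + (2 ^ n - 1) * h 0 ≤ 2 ^ n * h 1 := by
    simpa [hh] using eval_two_add_le_two_pow_mul_eval_one hdeg.le hcoeff
  rw [pow_succ']
  exact le_two_mul_of_mem_qdepthSet h0 (by simpa [hh] using hP0) hE h2 hd.1
end
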